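/- Let c > 0 and σ > 0, and define the batch-dependent spectral-norm bound m(b) = max(λ + cσ²/(bλ), 2σ√(c/b)) for λ > 0 (interpreting the first branch when λ > σ√(c/b) and the second otherwise). If λ ≤ σ√(c/b) for all b ≤ b₀ (no outlier regime), then on this range m(b) = 2σ√(c/b), so the maximal stable learning rate 2/m(b) scales as √b; whereas when λ > σ√(c/b) and cσ²/(bλ) ≫ λ, m(b) ≈ cσ²/(bλ) and 2/m(b) scales linearly in b. Precisely: for b such that cσ²/(bλ) ≥ λ, one has m(b) ≤ 2cσ²/(bλ), hence 2/m(b) ≥ bλ/(cσ²) grows at least linearly in b. -/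

import Mathlib

/-- Learning-rate scaling dichotomy: with the batch-dependent spectral-norm
bound `m(b)` equal to `λ + cσ²/(bλ)` when `λ` exceeds the bulk edge
`σ√(c/b)` and `2σ√(c/b)` otherwise, in the no-outlier regime (`λ ≤ σ√(c/b)`
for all `b ≤ b₀`) the maximal stable learning rate `2/m(b)` equals
`√b/(σ√c)` (i.e. scales as `√b`), while in the outlier-dominated regime
(`cσ²/(bλ) ≥ λ`) one has `m(b) ≤ 2cσ²/(bλ)` and hence
`2/m(b) ≥ bλ/(cσ²)` grows at least linearly in `b`. -/
theorem learning_rate_scaling_dichotomy (c σ lam : ℝ)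
    (hc : 0 < c) (hσ : 0 < σ) (hlam : 0 < lam) :
    let m : ℝ → ℝ := fun b =>
      if σ * Real.sqrt (c / b) < lam then lam + c * σ ^ 2 / (b * lam)
      else 2 * σ * Real.sqrt (c / b)
    (∀ b₀ b : ℝ, 0 < b → b ≤ b₀ → lam ≤ σ * Real.sqrt (c / b) →
        m b = 2 * σ * Real.sqrt (c / b)
        ∧ 2 / m b = Real.sqrt b / (σ * Real.sqrt c))
    ∧ (∀ b : ℝ, 0 < b → σ * Real.sqrt (c / b) < lam →
        lam ≤ c * σ ^ 2 / (b * lam) →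
        m b ≤ 2 * c * σ ^ 2 / (b * lam)
        ∧ b * lam / (c * σ ^ 2) ≤ 2 / m b) := by
  intro m
  constructor
  · intro b₀ b hb _ hle
    have hmb : m b = 2 * σ * Real.sqrt (c / b) := by
      simp only [m, if_neg (not_lt.mpr hle)]
    have hsb : (0:ℝ) < Real.sqrt b := Real.sqrt_pos.mpr hb
    have hsc : (0:ℝ) < Real.sqrt c := Real.sqrt_pos.mpr hc
    refine ⟨hmb, ?_⟩
    rw [hmb, Real.sqrt_div hc.le]
    field_simp
  · intro b hb hgt hle
    have hmb : m b = lam + c * σ ^ 2 / (b * lam) := by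
      simp only [m, if_pos hgt]
    have hpos : 0 < c * σ ^ 2 / (b * lam) := by positivity
    have h1 : m b ≤ 2 * c * σ ^ 2 / (b * lam) := by
      rw [hmb]
      have : 2 * c * σ ^ 2 / (b * lam) = c * σ ^ 2 / (b * lam) + c * σ ^ 2 / (b * lam) := by
        ring
      rw [this]
      linarith
    refine ⟨h1, ?_⟩
    have hm0 : 0 < m b := by rw [hmb]; positivity
    have h2 : 2 / (2 * c * σ ^ 2 / (b * lam)) ≤ 2 / m b :=
      div_le_div_of_nonneg_left (by norm_num) hm0 h1
    calc b * lam / (c * σ ^ 2) = 2 / (2 * c * σ ^ 2 / (b * lam)) := by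
          field_simp
      _ ≤ 2 / m b := h2
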